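/- Let G be a group with σ(g) = q⁻¹ g q for a fixed q ∈ G. Then the map Φ : Conj(G) → Conj(G ⋊_σ ℤ), g ↦ (q⁻¹ g, 1), is an injective quandle homomorphism: Φ(h⁻¹ g h) = Φ(h)⁻¹ Φ(g) Φ(h) and Φ is injective. -/

import Mathlib

/-- The underlying set of the semidirect product `G ⋊_σ ℤ`, with multiplication
`(g,m)·(h,n) = (σⁿ(g) h, m + n)`. -/
def Hat (G : Type*) [Group G] (σ : MulAut G) : Type _ := G × ℤ

namespace Hat

variable {G : Type*} [Group G] (σ : MulAut G)

/-- The element `(g, n)` of `G ⋊_σ ℤ`. -/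
def mk (g : G) (n : ℤ) : Hat G σ := (g, n)

instance : Group (Hat G σ) where
  mul x y := ((σ ^ y.2) x.1 * y.1, x.2 + y.2)
  one := ((1 : G), (0 : ℤ))
  inv x := ((σ ^ (-x.2)) x.1⁻¹, -x.2)
  mul_assoc x y z := by
    show (Prod.mk ((σ ^ z.2) ((σ ^ y.2) x.1 * y.1) * z.1) (x.2 + y.2 + z.2) : G × ℤ) =
      ((σ ^ (y.2 + z.2)) x.1 * ((σ ^ z.2) y.1 * z.1), x.2 + (y.2 + z.2))
    have : (σ ^ (y.2 + z.2)) x.1 = (σ ^ z.2) ((σ ^ y.2) x.1) := by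
      rw [add_comm, zpow_add, MulAut.mul_apply]
    simp [this, map_mul, mul_assoc, add_assoc]
  one_mul x := by
    show (Prod.mk ((σ ^ x.2) 1 * x.1) (0 + x.2) : G × ℤ) = x
    simp
    rfl
  mul_one x := by
    show (Prod.mk ((σ ^ (0 : ℤ)) x.1 * 1) (x.2 + 0) : G × ℤ) = x
    simp
    rfl
  inv_mul_cancel x := by
    show (Prod.mk ((σ ^ x.2) ((σ ^ (-x.2)) x.1⁻¹) * x.1) (-x.2 + x.2) : G × ℤ) =
      ((1 : G), (0 : ℤ))
    have : (σ ^ x.2) ((σ ^ (-x.2)) x.1⁻¹) = x.1⁻¹ := by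
      rw [← MulAut.mul_apply, ← zpow_add, add_neg_cancel, zpow_zero, MulAut.one_apply]
    simp [this]

end Hat


namespace Hat

variable {G : Type*} [Group G] (σ : MulAut G)

theorem mk_mul_mk (g h : G) (m n : ℤ) : mk σ g m * mk σ h n = mk σ ((σ ^ n) g * h) (m + n) :=
  rfl

theorem inv_mk (g : G) (n : ℤ) : (mk σ g n)⁻¹ = mk σ ((σ ^ (-n)) g⁻¹) (-n) :=
  rfl

theorem mk_inj {g h : G} {m n : ℤ} : mk σ g m = mk σ h n ↔ g = h ∧ m = n :=
  Prod.mk_inj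

theorem mk_one_conj (x y : G) :
    (mk σ x 1)⁻¹ * mk σ y 1 * mk σ x 1 = mk σ (σ (x⁻¹ * y) * x) 1 := by
  have hcancel : (σ ^ (1 : ℤ)) ((σ ^ (-1 : ℤ)) x⁻¹) = x⁻¹ := by
    rw [← MulAut.mul_apply, ← zpow_add, add_neg_cancel, zpow_zero, MulAut.one_apply]
  rw [inv_mk, mk_mul_mk, mk_mul_mk, hcancel, zpow_one, neg_add_cancel, zero_add]

end Hat

/-- Let `G` be a group and `σ(g) = q⁻¹ g q` for a fixed `q ∈ G`.  Then the map
`Φ : Conj(G) → Conj(G ⋊_σ ℤ)`, `g ↦ (q⁻¹ g, 1)`, is an injective quandle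
homomorphism: `Φ(h⁻¹ g h) = Φ(h)⁻¹ Φ(g) Φ(h)` and `Φ` is injective. -/
theorem conj_embeds_in_hat {G : Type*} [Group G] (q : G) (σ : MulAut G)
    (hσ : ∀ g : G, σ g = q⁻¹ * g * q) :
    Function.Injective (fun g : G => Hat.mk σ (q⁻¹ * g) 1) ∧
    (∀ g h : G,
      Hat.mk σ (q⁻¹ * (h⁻¹ * g * h)) 1 =
        (Hat.mk σ (q⁻¹ * h) 1)⁻¹ * Hat.mk σ (q⁻¹ * g) 1 * Hat.mk σ (q⁻¹ * h) 1) := by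
  refine ⟨fun a b hab ↦ mul_left_cancel ((Hat.mk_inj σ).1 hab).1, fun g h ↦ ?_⟩
  rw [Hat.mk_one_conj, hσ]
  group
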